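/- arXiv:1304.0874 — 2 statements merged into one kernel-verified Lean document; each statement's English description precedes it below -/
import Mathlib

section
/- Let f(X) = a_0 + a_1 X + ... + a_n X^n ∈ Z[X] with a_0 a_n ≠ 0, let k ≥ 2, let p_1, ..., p_k be pairwise distinct primes, and let m_1, ..., m_k be positive integers. Assume for each j = 1, ..., k that either (i) p_j^{m_j} divides a_i for i = 1, ..., n, p_j^{m_j+1} does not divide a_n, and p_j does not divide a_0; or (ii) p_j^{m_j} divides a_i for i = 0, ..., n-1, p_j^{m_j+1} does not divide a_0, and p_j does not divide a_n. If gcd(gcd(m_1,n), ..., gcd(m_k,n)) = 1, then f is irreducible over Q. -/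
/-!
Fix one of the primes `p`, let `v` be the `p`-adic absolute value on `ℚ` and choose `c > 0` with
`v(a_n) c^n = v(a_0)`, i.e. `c^n = p^{±m}`. The hypotheses say that the Gauss norm
`max_i v(a_i) c^i` of `f` is attained both at `i = 0` and at `i = n` (the Newton polygon of `f` at
`p` is one segment). The Gauss norm is multiplicative and dominates the constant and the leading
term, so the same holds for every factor `g` of `f` over `ℚ`: `v(lead g) c^d = v(g_0)` with
`d = deg g`. Taking `n`-th powers and comparing exponents of `p` gives `n ∣ d m`. Doing this for
every `p_j` yields `n ∣ d gcd(m_j, n)` for all `j`, hence `n ∣ d`, so `d = 0` or `d = n`.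
-/

open Polynomial Finset

namespace Polynomial

section Semiring

variable {R : Type*} [Semiring R] (v : AbsoluteValue R ℝ) (c : ℝ)

/-- For a `p`-adic `v`, this says that the Newton polygon of `F` is a single segment. -/
def IsPureAt (F : R[X]) : Prop :=
  F.gaussNorm v c = v (F.coeff 0) ∧ F.gaussNorm v c = v F.leadingCoeff * c ^ F.natDegree

variable {v c}

theorem isPureAt_of_le_min {F : R[X]} (hc : 0 < c)
    (hends : v F.leadingCoeff * c ^ F.natDegree = v (F.coeff 0))
    (hdvd : ∀ i, 0 < i → i < F.natDegree →
      v (F.coeff i) ≤ min (v (F.coeff 0)) (v F.leadingCoeff)) :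
    IsPureAt v c F := by
  have hle : ∀ i, v (F.coeff i) * c ^ i ≤ v (F.coeff 0) := by
    intro i
    rcases Nat.eq_zero_or_pos i with rfl | hi0
    · simp
    rcases lt_trichotomy i F.natDegree with hi | rfl | hi
    · rcases le_total c 1 with hc1 | hc1
      · calc v (F.coeff i) * c ^ i ≤ v (F.coeff i) * 1 := by
              gcongr; exact pow_le_one₀ hc.le hc1
          _ ≤ v (F.coeff 0) := by simpa using (hdvd i hi0 hi).trans (min_le_left _ _)
      · calc v (F.coeff i) * c ^ i ≤ v F.leadingCoeff * c ^ F.natDegree := by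
              gcongr
              exact (hdvd i hi0 hi).trans (min_le_right _ _)
          _ = v (F.coeff 0) := hends
    · exact hends.le
    · simp [coeff_eq_zero_of_natDegree_lt hi]
  have hnorm : F.gaussNorm v c = v (F.coeff 0) := by
    obtain ⟨i, hi⟩ := F.exists_eq_gaussNorm v c
    exact le_antisymm (hi ▸ hle i) (by simpa using F.le_gaussNorm v hc.le 0)
  exact ⟨hnorm, hnorm.trans hends.symm⟩

end Semiring

theorem IsPureAt.of_mul_left {R : Type*} [Ring R] [NoZeroDivisors R] {v : AbsoluteValue R ℝ}
    {c : ℝ} (hna : IsNonarchimedean v) (hc : 0 < c) {g h : R[X]} (hg : g ≠ 0) (hh : h ≠ 0)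
    (hgh : IsPureAt v c (g * h)) : IsPureAt v c g := by
  obtain ⟨hconst, hlead⟩ := hgh
  rw [gaussNorm_mul hna hc, mul_coeff_zero, map_mul] at hconst
  rw [gaussNorm_mul hna hc, leadingCoeff_mul, natDegree_mul hg hh, map_mul, pow_add,
    mul_mul_mul_comm] at hlead
  have hg_lead : 0 < v g.leadingCoeff * c ^ g.natDegree :=
    mul_pos (v.pos (leadingCoeff_ne_zero.2 hg)) (pow_pos hc _)
  have hh_lead : 0 < v h.leadingCoeff * c ^ h.natDegree :=
    mul_pos (v.pos (leadingCoeff_ne_zero.2 hh)) (pow_pos hc _)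
  have hg_norm := g.le_gaussNorm v hc.le g.natDegree
  have hh_norm := h.le_gaussNorm v hc.le h.natDegree
  have hg_const : v (g.coeff 0) ≤ g.gaussNorm v c := by simpa using g.le_gaussNorm v hc.le 0
  have hh_const : v (h.coeff 0) ≤ h.gaussNorm v c := by simpa using h.le_gaussNorm v hc.le 0
  have hh_const_pos : 0 < v (h.coeff 0) := by
    refine (v.nonneg _).lt_of_ne fun h0 => ?_
    rw [← h0, mul_zero] at hconst
    exact (mul_pos (hg_lead.trans_le hg_norm) (hh_lead.trans_le hh_norm)).ne' hconst
  refine ⟨?_, ?_⟩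
  · exact ((mul_eq_mul_iff_eq_and_eq_of_pos' hg_const hh_const (hg_lead.trans_le hg_norm)
      hh_const_pos).1 hconst.symm).1.symm
  · exact ((mul_eq_mul_iff_eq_and_eq_of_pos hg_norm hh_norm hg_lead
      (hh_lead.trans_le hh_norm)).1 hlead.symm).1.symm

end Polynomial

namespace Rat.AbsoluteValue

variable {p : ℕ} [Fact p.Prime]

theorem isNonarchimedean_padic : IsNonarchimedean (padic p) := fun q r => by
  simpa using (Rat.cast_le (K := ℝ)).2 (padicNorm.nonarchimedean (p := p) (q := q) (r := r))

theorem padic_eq_zpow {q : ℚ} (hq : q ≠ 0) : padic p q = (p : ℝ) ^ (-padicValRat p q) := by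
  simp [padicNorm.eq_zpow_of_nonzero hq]

theorem padic_intCast_le_of_pow_dvd {m : ℕ} {z : ℤ} (hz : (p : ℤ) ^ m ∣ z) :
    padic p z ≤ (p : ℝ) ^ (-(m : ℤ)) := by
  have := padicNorm.dvd_iff_norm_le.1 (by exact_mod_cast hz)
  simpa using (Rat.cast_le (K := ℝ)).2 this

theorem padic_intCast_of_pow_dvd_of_not_pow_succ_dvd {m : ℕ} {z : ℤ} (hz : (p : ℤ) ^ m ∣ z)
    (hz' : ¬ (p : ℤ) ^ (m + 1) ∣ z) : padic p z = (p : ℝ) ^ (-(m : ℤ)) := by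
  have hz0 : z ≠ 0 := by rintro rfl; exact hz' (dvd_zero _)
  have hval : padicValInt p z = m := by
    have hle := (padicValInt_dvd_iff m z).1 hz
    have hlt := mt (padicValInt_dvd_iff (m + 1) z).2 hz'
    omega
  rw [padic_eq_zpow (Int.cast_ne_zero.2 hz0), padicValRat.of_int, hval]

theorem dvd_natDegree_mul_of_isPureAt {c : ℝ} (hc : 0 < c) {n : ℕ} {z : ℤ}
    (hcn : c ^ n = (p : ℝ) ^ z) {g : ℚ[X]} (hg : g ≠ 0) (hpure : IsPureAt (padic p) c g) :
    (n : ℤ) ∣ g.natDegree * z := by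
  have hlead : g.leadingCoeff ≠ 0 := leadingCoeff_ne_zero.2 hg
  have hends : padic p g.leadingCoeff * c ^ g.natDegree = padic p (g.coeff 0) :=
    hpure.2.symm.trans hpure.1
  have hcoeff0 : g.coeff 0 ≠ 0 := by
    rintro h0
    rw [h0, map_zero] at hends
    exact (mul_pos ((padic p).pos hlead) (pow_pos hc _)).ne' hends
  have hp : (1 : ℝ) < p := by exact_mod_cast (Fact.out : p.Prime).one_lt
  rw [padic_eq_zpow hlead, padic_eq_zpow hcoeff0] at hends
  have hp0 : (p : ℝ) ≠ 0 := by positivity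
  have hval : (p : ℝ) ^ (-padicValRat p g.leadingCoeff * n + g.natDegree * z) =
      (p : ℝ) ^ (-padicValRat p (g.coeff 0) * n) := by
    calc _ = ((p : ℝ) ^ (-padicValRat p g.leadingCoeff)) ^ n * (c ^ n) ^ g.natDegree := by
          rw [hcn, zpow_add₀ hp0, zpow_mul, mul_comm (g.natDegree : ℤ), zpow_mul]; norm_cast
      _ = ((p : ℝ) ^ (-padicValRat p (g.coeff 0))) ^ n := by rw [← hends]; ring
      _ = _ := by rw [zpow_mul]; norm_cast
  have := zpow_right_injective₀ (by positivity) hp.ne' hval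
  exact ⟨padicValRat p g.leadingCoeff - padicValRat p (g.coeff 0), by linarith⟩

theorem dvd_natDegree_mul_of_padic_le_min {F g h : ℚ[X]} (hF : F = g * h) (hg : g ≠ 0)
    (hh : h ≠ 0) (hn : F.natDegree ≠ 0) {z : ℤ}
    (hends : padic p F.leadingCoeff * (p : ℝ) ^ z = padic p (F.coeff 0))
    (hdvd : ∀ i, 0 < i → i < F.natDegree →
      padic p (F.coeff i) ≤ min (padic p (F.coeff 0)) (padic p F.leadingCoeff)) :
    (F.natDegree : ℤ) ∣ g.natDegree * z := by
  have hpz : (0 : ℝ) < (p : ℝ) ^ z := zpow_pos (Nat.cast_pos.2 (Fact.out : p.Prime).pos) z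
  obtain ⟨c, hc, hcn⟩ : ∃ c : ℝ, 0 < c ∧ c ^ F.natDegree = (p : ℝ) ^ z :=
    ⟨_, Real.rpow_pos_of_pos hpz _, Real.rpow_inv_natCast_pow hpz.le hn⟩
  have hpure : IsPureAt (padic p) c F := isPureAt_of_le_min hc (by rw [hcn, hends]) hdvd
  subst hF
  exact dvd_natDegree_mul_of_isPureAt hc hcn hg (hpure.of_mul_left isNonarchimedean_padic hc hg hh)

end Rat.AbsoluteValue

namespace Polynomial

theorem irreducible_of_natDegree_dvd {K : Type*} [Field K] {F : K[X]} (hF : 0 < F.natDegree)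
    (H : ∀ g h : K[X], F = g * h → g ≠ 0 → h ≠ 0 → F.natDegree ∣ g.natDegree) :
    Irreducible F := by
  refine ⟨fun hu => hF.ne' (natDegree_eq_zero_of_isUnit hu), fun g h hgh => ?_⟩
  have hF0 : F ≠ 0 := ne_zero_of_natDegree_gt hF
  have hg : g ≠ 0 := left_ne_zero_of_mul (hgh ▸ hF0)
  have hh : h ≠ 0 := right_ne_zero_of_mul (hgh ▸ hF0)
  have hdeg : g.natDegree + h.natDegree = F.natDegree := by rw [hgh, natDegree_mul hg hh]
  have hdvd := H g h hgh hg hh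
  rcases Nat.eq_zero_or_pos g.natDegree with hg0 | hg0
  · exact .inl (isUnit_iff_degree_eq_zero.2 (by rw [degree_eq_natDegree hg, hg0]; rfl))
  · have hh0 : h.natDegree = 0 := by have := Nat.le_of_dvd hg0 hdvd; omega
    exact .inr (isUnit_iff_degree_eq_zero.2 (by rw [degree_eq_natDegree hh, hh0]; rfl))

theorem natDegree_sum_range_C_mul_X_pow {R : Type*} [Semiring R] {b : ℕ → R} {n : ℕ}
    (hb : b n ≠ 0) : (∑ j ∈ range (n + 1), C (b j) * X ^ j).natDegree = n := by
  refine natDegree_eq_of_le_of_coeff_ne_zero ?_ (by simpa using hb)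
  exact natDegree_le_iff_coeff_eq_zero.2 fun i hi => by simp; omega

section IntegerCoefficients

variable {p : ℕ} [Fact p.Prime] {F : ℤ[X]} {g h : ℚ[X]} {m : ℕ}

open Rat.AbsoluteValue

theorem natDegree_dvd_mul_of_pow_dvd_coeff_of_not_dvd_coeff_zero
    (hF : F.map (Int.castRingHom ℚ) = g * h) (hg : g ≠ 0) (hh : h ≠ 0) (hn : F.natDegree ≠ 0)
    (hdvd : ∀ i, 1 ≤ i → i ≤ F.natDegree → (p : ℤ) ^ m ∣ F.coeff i)
    (hlead : ¬ (p : ℤ) ^ (m + 1) ∣ F.leadingCoeff) (h0 : ¬ (p : ℤ) ∣ F.coeff 0) :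
    F.natDegree ∣ g.natDegree * m := by
  have hdeg := natDegree_map_eq_of_injective (RingHom.injective_int (Int.castRingHom ℚ)) F
  have hv_lead : padic p F.leadingCoeff = (p : ℝ) ^ (-(m : ℤ)) :=
    padic_intCast_of_pow_dvd_of_not_pow_succ_dvd (hdvd _ (Nat.one_le_iff_ne_zero.2 hn) le_rfl)
      hlead
  have hv0 : padic p (F.coeff 0) = 1 := by
    simpa using padic_intCast_of_pow_dvd_of_not_pow_succ_dvd (p := p) (m := 0) (one_dvd _)
      (by simpa using h0)
  have hp : (1 : ℝ) ≤ p := by exact_mod_cast (Fact.out : p.Prime).one_le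
  have := dvd_natDegree_mul_of_padic_le_min (p := p) hF hg hh (hdeg ▸ hn) (z := m) ?_ ?_
  · rw [hdeg] at this; exact_mod_cast this
  all_goals simp only [leadingCoeff, hdeg, coeff_map, eq_intCast] at hv_lead ⊢
  · rw [hv_lead, hv0, ← zpow_add₀ (zero_lt_one.trans_le hp).ne', neg_add_cancel, zpow_zero]
  · intro i hi0 hi
    rw [hv_lead, hv0, min_eq_right (zpow_le_one_of_nonpos₀ hp (by simp))]
    exact padic_intCast_le_of_pow_dvd (hdvd i hi0 hi.le)

theorem natDegree_dvd_mul_of_pow_dvd_coeff_of_not_dvd_leadingCoeff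
    (hF : F.map (Int.castRingHom ℚ) = g * h) (hg : g ≠ 0) (hh : h ≠ 0) (hn : F.natDegree ≠ 0)
    (hdvd : ∀ i < F.natDegree, (p : ℤ) ^ m ∣ F.coeff i)
    (h0 : ¬ (p : ℤ) ^ (m + 1) ∣ F.coeff 0) (hlead : ¬ (p : ℤ) ∣ F.leadingCoeff) :
    F.natDegree ∣ g.natDegree * m := by
  have hdeg := natDegree_map_eq_of_injective (RingHom.injective_int (Int.castRingHom ℚ)) F
  have hv0 : padic p (F.coeff 0) = (p : ℝ) ^ (-(m : ℤ)) :=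
    padic_intCast_of_pow_dvd_of_not_pow_succ_dvd (hdvd 0 (Nat.pos_of_ne_zero hn)) h0
  have hv_lead : padic p F.leadingCoeff = 1 := by
    simpa using padic_intCast_of_pow_dvd_of_not_pow_succ_dvd (p := p) (m := 0) (one_dvd _)
      (by simpa using hlead)
  have hp : (1 : ℝ) ≤ p := by exact_mod_cast (Fact.out : p.Prime).one_le
  have := dvd_natDegree_mul_of_padic_le_min (p := p) hF hg hh (hdeg ▸ hn) (z := -m) ?_ ?_
  · rw [hdeg, mul_neg, dvd_neg] at this; exact_mod_cast this
  all_goals simp only [leadingCoeff, hdeg, coeff_map, eq_intCast] at hv_lead ⊢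
  · rw [hv_lead, hv0, one_mul]
  · intro i _ hi
    rw [hv_lead, hv0, min_eq_left (zpow_le_one_of_nonpos₀ hp (by simp))]
    exact padic_intCast_le_of_pow_dvd (hdvd i hi)

end IntegerCoefficients

end Polynomial

theorem Nat.dvd_of_forall_dvd_mul_of_gcd_gcd_eq_one {ι : Type*} {s : Finset ι} {m : ι → ℕ}
    {n d : ℕ} (H : ∀ j ∈ s, n ∣ d * m j) (hgcd : s.gcd (fun j => (m j).gcd n) = 1) : n ∣ d := by
  have : n ∣ s.gcd (fun j => d * (m j).gcd n) := Finset.dvd_gcd fun j hj => by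
    rw [← Nat.gcd_mul_left]
    exact Nat.dvd_gcd (H j hj) (dvd_mul_left n d)
  simpa [Finset.gcd_mul_left, hgcd] using this

theorem corollary_1_2_general (n : ℕ) (hn : 1 ≤ n) (a : ℕ → ℤ)
    (han : a n ≠ 0)
    (k : ℕ) (p : Fin k → ℕ) (hp : ∀ j, (p j).Prime)
    (m : Fin k → ℕ)
    (h : ∀ j, ((∀ i, 1 ≤ i → i ≤ n → ((p j : ℤ))^(m j) ∣ a i) ∧
              ¬ ((p j : ℤ))^(m j + 1) ∣ a n ∧ ¬ (p j : ℤ) ∣ a 0) ∨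
             ((∀ i < n, ((p j : ℤ))^(m j) ∣ a i) ∧
              ¬ ((p j : ℤ))^(m j + 1) ∣ a 0 ∧ ¬ (p j : ℤ) ∣ a n))
    (hgcd : Finset.univ.gcd (fun j => Nat.gcd (m j) n) = 1) :
    Irreducible ((∑ i ∈ range (n+1), C (a i) * X ^ i).map (Int.castRingHom ℚ)) := by
  set F : ℤ[X] := ∑ i ∈ range (n + 1), C (a i) * X ^ i
  have hcoeff : ∀ i ≤ n, F.coeff i = a i := fun i hi => by
    simp [F, Nat.lt_succ_iff.2 hi]
  have hdeg : F.natDegree = n := natDegree_sum_range_C_mul_X_pow han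
  have hlead : F.leadingCoeff = a n := by rw [leadingCoeff, hdeg, hcoeff n le_rfl]
  have hdeg_map : (F.map (Int.castRingHom ℚ)).natDegree = n := by
    rw [natDegree_map_eq_of_injective (RingHom.injective_int _), hdeg]
  refine irreducible_of_natDegree_dvd (hdeg_map ▸ hn) fun g q hFgq hg hq => hdeg_map ▸ ?_
  refine Nat.dvd_of_forall_dvd_mul_of_gcd_gcd_eq_one (fun j _ => ?_) hgcd
  have : Fact (p j).Prime := ⟨hp j⟩
  rw [← hdeg]
  rcases h j with ⟨hdvd, han_dvd, ha0_dvd⟩ | ⟨hdvd, ha0_dvd, han_dvd⟩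
  · exact natDegree_dvd_mul_of_pow_dvd_coeff_of_not_dvd_coeff_zero hFgq hg hq (by omega)
      (by rw [hdeg]; exact fun i h1 h2 => hcoeff i h2 ▸ hdvd i h1 h2)
      (by rwa [hlead]) (by rwa [hcoeff 0 (Nat.zero_le n)])
  · exact natDegree_dvd_mul_of_pow_dvd_coeff_of_not_dvd_leadingCoeff hFgq hg hq (by omega)
      (by rw [hdeg]; exact fun i hi => hcoeff i hi.le ▸ hdvd i hi)
      (by rwa [hcoeff 0 (Nat.zero_le n)]) (by rwa [hlead])

theorem corollary_1_2 (n : ℕ) (hn : 1 ≤ n) (a : ℕ → ℤ)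
    (ha0 : a 0 ≠ 0) (han : a n ≠ 0)
    (k : ℕ) (hk : 2 ≤ k) (p : Fin k → ℕ) (hp : ∀ j, (p j).Prime)
    (hpp : Function.Injective p)
    (m : Fin k → ℕ) (hm : ∀ j, 0 < m j)
    (h : ∀ j, ((∀ i, 1 ≤ i → i ≤ n → ((p j : ℤ))^(m j) ∣ a i) ∧
              ¬ ((p j : ℤ))^(m j + 1) ∣ a n ∧ ¬ (p j : ℤ) ∣ a 0) ∨
             ((∀ i < n, ((p j : ℤ))^(m j) ∣ a i) ∧
              ¬ ((p j : ℤ))^(m j + 1) ∣ a 0 ∧ ¬ (p j : ℤ) ∣ a n))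
    (hgcd : Finset.univ.gcd (fun j => Nat.gcd (m j) n) = 1) :
    Irreducible ((∑ i ∈ range (n+1), C (a i) * X ^ i).map (Int.castRingHom ℚ)) :=
  corollary_1_2_general n hn a han k p hp m h hgcd
end

section
/- Let f(X) = a_0 + a_1 X + ... + a_n X^n ∈ Z[X] with a_0 a_n ≠ 0. Suppose there exist two distinct primes p and q, a positive integer k, and an index j with j < n/gcd(k,n), such that: (i) p does not divide a_i for all i ≤ j, p divides a_i for all i > j, and p^2 does not divide a_n; (ii) q does not divide a_0, q^k divides a_i for all i > 0, and q^{k+1} does not divide a_n. Then f is irreducible over Q. -/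
/-!
Attach to the `i`-th coefficient of `g ∈ ℤ[X]` the weight `M · v_P(g_i) + T · i`. The minimal
weight behaves like a valuation on `ℤ[X]`: the product of the leftmost minimal terms of `g`
and `h` cannot be cancelled in `g * h`, since all other products in that coefficient are
divisible by a higher power of `P`.

With `P = q`, `M = n`, `T = -k`, all coefficients of `f = g * h` have weight `≥ 0`, and the
weights at `0` and `n` are `0` (the Newton polygon is one segment of slope `k / n`). Hence the
leading coefficient of each factor `g` has weight exactly `0`, i.e. `n ∣ k · deg g`, so both
factors have degree at least `n / gcd(k, n) > j`. On the other hand, `p² ∤ a_n` forces `p` not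
to divide one of the leading coefficients, and reducing mod `p`, where `f` has degree `≤ j`,
bounds the degree of that factor by `j`.
-/

open Polynomial Finset

theorem Nat.div_gcd_dvd_of_dvd_mul {n k t : ℕ} (hn : 0 < n) (h : n ∣ k * t) :
    n / Nat.gcd k n ∣ t := by
  have := Nat.ModEq.cancel_left_div_gcd (a := t) (b := 0) hn (by simpa [Nat.modEq_zero_iff_dvd])
  rwa [Nat.gcd_comm, Nat.modEq_zero_iff_dvd] at this

theorem Finset.exists_leftmost_min_image {α β : Type*} [LinearOrder α] [LinearOrder β]
    (s : Finset α) (hs : s.Nonempty) (v : α → β) :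
    ∃ i ∈ s, ∀ b ∈ s, v i ≤ v b ∧ (b < i → v i < v b) := by
  obtain ⟨i, hi, hmin⟩ := s.exists_min_image (fun b => toLex (v b, b)) hs
  refine ⟨i, hi, fun b hb => ?_⟩
  have h := Prod.Lex.toLex_le_toLex.1 (hmin b hb)
  exact ⟨h.elim le_of_lt (·.1.le), fun hbi => h.resolve_right fun h' => h'.2.not_gt hbi⟩

/-- Only meaningful on the support of `g`, since `padicValInt P 0 = 0`. -/
def newtonWeight (P M : ℕ) (T : ℤ) (g : ℤ[X]) (i : ℕ) : ℤ :=
  M * padicValInt P (g.coeff i) + T * i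

section NewtonWeight

variable {P M : ℕ} {T : ℤ}

theorem pow_dvd_coeff_mul_coeff_of_newtonWeight_lt (hM : 0 < M) {g h : ℤ[X]}
    {a b a' b' : ℕ} (hsum : a' + b' = a + b)
    (hlt : newtonWeight P M T g a + newtonWeight P M T h b <
      newtonWeight P M T g a' + newtonWeight P M T h b') :
    (P : ℤ) ^ (padicValInt P (g.coeff a) + padicValInt P (h.coeff b) + 1) ∣
      g.coeff a' * h.coeff b' := by
  have hv : padicValInt P (g.coeff a) + padicValInt P (h.coeff b) + 1 ≤
      padicValInt P (g.coeff a') + padicValInt P (h.coeff b') := by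
    have hsum' : (a' : ℤ) + b' = a + b := by exact_mod_cast hsum
    unfold newtonWeight at hlt
    have : (M : ℤ) * (padicValInt P (g.coeff a) + padicValInt P (h.coeff b)) <
        M * (padicValInt P (g.coeff a') + padicValInt P (h.coeff b')) := by
      linear_combination hlt + T * hsum'
    exact_mod_cast lt_of_mul_lt_mul_left this (by positivity)
  exact (pow_dvd_pow _ hv).trans
    (pow_add (P : ℤ) _ _ ▸ mul_dvd_mul (padicValInt_dvd _) (padicValInt_dvd _))

theorem le_newtonWeight_add [Fact P.Prime] (hM : 0 < M) {g h : ℤ[X]} {L : ℤ}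
    (hL : ∀ c ∈ (g * h).support, L ≤ newtonWeight P M T (g * h) c)
    {i i' : ℕ} (hi : i ∈ g.support) (hi' : i' ∈ h.support) :
    L ≤ newtonWeight P M T g i + newtonWeight P M T h i' := by
  obtain ⟨a, ha, hamin⟩ :=
    g.support.exists_leftmost_min_image ⟨i, hi⟩ (newtonWeight P M T g)
  obtain ⟨b, hb, hbmin⟩ :=
    h.support.exists_leftmost_min_image ⟨i', hi'⟩ (newtonWeight P M T h)
  set w := padicValInt P (g.coeff a) + padicValInt P (h.coeff b)
  have hrest : ∀ x ∈ (antidiagonal (a + b)).erase (a, b),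
      (P : ℤ) ^ (w + 1) ∣ g.coeff x.1 * h.coeff x.2 := by
    rintro ⟨a', b'⟩ hx
    rw [mem_erase, HasAntidiagonal.mem_antidiagonal, Ne, Prod.mk.injEq] at hx
    by_cases ha' : a' ∈ g.support
    swap; · simp [notMem_support_iff.1 ha']
    by_cases hb' : b' ∈ h.support
    swap; · simp [notMem_support_iff.1 hb']
    refine pow_dvd_coeff_mul_coeff_of_newtonWeight_lt (T := T) hM hx.2 ?_
    rcases lt_trichotomy a' a with hlt | rfl | hgt
    · exact add_lt_add_of_lt_of_le ((hamin a' ha').2 hlt) (hbmin b' hb').1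
    · exact absurd (by omega) hx.1
    · exact add_lt_add_of_le_of_lt (hamin a' ha').1 ((hbmin b' hb').2 (by omega))
  have hlead : ¬ (P : ℤ) ^ (w + 1) ∣ g.coeff a * h.coeff b := by
    have hab := mul_ne_zero (mem_support_iff.1 ha) (mem_support_iff.1 hb)
    rw [padicValInt_dvd_iff, padicValInt.mul (mem_support_iff.1 ha) (mem_support_iff.1 hb)]
    omega
  have hc : ¬ (P : ℤ) ^ (w + 1) ∣ (g * h).coeff (a + b) := by
    have hab : (a, b) ∈ antidiagonal (a + b) := HasAntidiagonal.mem_antidiagonal.2 rfl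
    rwa [coeff_mul, ← add_sum_erase _ _ hab, dvd_add_left (dvd_sum hrest)]
  have hc0 : (g * h).coeff (a + b) ≠ 0 := fun h0 => hc (h0 ▸ dvd_zero _)
  have hcv : padicValInt P ((g * h).coeff (a + b)) ≤ w := by
    rw [padicValInt_dvd_iff] at hc
    omega
  calc L ≤ newtonWeight P M T (g * h) (a + b) := hL _ (mem_support_iff.2 hc0)
    _ ≤ newtonWeight P M T g a + newtonWeight P M T h b := by
      have hcv' : (padicValInt P ((g * h).coeff (a + b)) : ℤ) ≤
          padicValInt P (g.coeff a) + padicValInt P (h.coeff b) := by exact_mod_cast hcv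
      unfold newtonWeight
      push_cast
      nlinarith [mul_le_mul_of_nonneg_left hcv' (Nat.cast_nonneg (α := ℤ) M)]
    _ ≤ newtonWeight P M T g i + newtonWeight P M T h i' :=
      add_le_add (hamin i hi).1 (hbmin i' hi').1

end NewtonWeight

namespace Polynomial

theorem coeff_sum_range_C_mul_X_pow {R : Type*} [Semiring R] (n : ℕ) (a : ℕ → R) (i : ℕ) :
    (∑ i ∈ range (n + 1), C (a i) * X ^ i).coeff i = if i ≤ n then a i else 0 := by
  simp [coeff_X_pow]

theorem irreducible_map_cast_of_forall_eq_mul {f : ℤ[X]} (hf : 0 < f.natDegree)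
    (H : ∀ g h : ℤ[X], f = g * h → g.natDegree = 0 ∨ h.natDegree = 0) :
    Irreducible (f.map (Int.castRingHom ℚ)) := by
  have hc : f.content ≠ 0 := fun h0 => by simp [content_eq_zero_iff.1 h0] at hf
  have hunit : ∀ u : ℤ[X], u ∣ f.primPart → u.natDegree = 0 → IsUnit u := by
    intro u hu hu0
    rw [eq_C_of_natDegree_eq_zero hu0] at hu ⊢
    exact isUnit_C.2 (isPrimitive_iff_isUnit_of_C_dvd.1 f.isPrimitive_primPart _ hu)
  have hirr : Irreducible f.primPart := by
    refine ⟨fun hu => ?_, fun g h hgh => ?_⟩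
    · have := natDegree_eq_zero_of_isUnit hu
      rw [natDegree_primPart] at this
      omega
    · have := H (C f.content * g) h (by rw [mul_assoc, ← hgh, ← eq_C_content_mul_primPart])
      rw [natDegree_C_mul hc] at this
      exact this.imp (hunit g (hgh ▸ dvd_mul_right g h)) (hunit h (hgh ▸ dvd_mul_left h g))
  rw [eq_C_content_mul_primPart f, Polynomial.map_mul, map_C,
    irreducible_isUnit_mul (isUnit_C.2 (isUnit_iff_ne_zero.2 (by simpa using hc)))]
  exact (IsPrimitive.Int.irreducible_iff_irreducible_map_cast f.isPrimitive_primPart).1 hirr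

theorem natDegree_le_of_not_dvd_leadingCoeff {p j : ℕ} [Fact p.Prime]
    {f g h : ℤ[X]} (hfgh : f = g * h) (h0 : ¬ (p : ℤ) ∣ f.coeff 0)
    (hhigh : ∀ i, j < i → (p : ℤ) ∣ f.coeff i) (hlead : ¬ (p : ℤ) ∣ h.leadingCoeff) :
    h.natDegree ≤ j := by
  set π := Int.castRingHom (ZMod p)
  have hπ : ∀ x : ℤ, π x = 0 ↔ (p : ℤ) ∣ x := fun x =>
    ZMod.intCast_zmod_eq_zero_iff_dvd x p
  have hf : f.map π ≠ 0 := fun hf0 => h0 <| (hπ _).1 <| by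
    simpa [coeff_map] using congrArg (coeff · 0) hf0
  have hfj : (f.map π).natDegree ≤ j := natDegree_le_iff_coeff_eq_zero.2 fun i hi => by
    rw [coeff_map]
    exact (hπ _).2 (hhigh i (by exact_mod_cast hi))
  have hh : (h.map π).natDegree = h.natDegree :=
    natDegree_map_of_leadingCoeff_ne_zero _ ((hπ _).not.2 hlead)
  rw [hfgh, Polynomial.map_mul] at hf hfj
  rw [natDegree_mul (left_ne_zero_of_mul hf) (right_ne_zero_of_mul hf)] at hfj
  omega

theorem natDegree_dvd_mul_natDegree_of_eq_mul {q k : ℕ} [Fact q.Prime]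
    {f g h : ℤ[X]} (hfgh : f = g * h) (hn : 0 < f.natDegree) (h0 : ¬ (q : ℤ) ∣ f.coeff 0)
    (hmid : ∀ i, 0 < i → (q : ℤ) ^ k ∣ f.coeff i)
    (hlead : ¬ (q : ℤ) ^ (k + 1) ∣ f.leadingCoeff) :
    f.natDegree ∣ k * g.natDegree := by
  set n := f.natDegree
  have hf : f ≠ 0 := fun hf0 => h0 (by simp [hf0])
  have hg : g ≠ 0 := left_ne_zero_of_mul (hfgh ▸ hf)
  have hh : h ≠ 0 := right_ne_zero_of_mul (hfgh ▸ hf)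
  have hcoeff0 : g.coeff 0 * h.coeff 0 = f.coeff 0 := by rw [hfgh, mul_coeff_zero]
  have hg0 : ¬ (q : ℤ) ∣ g.coeff 0 := fun hd => h0 (hcoeff0 ▸ dvd_mul_of_dvd_left hd _)
  have hh0 : ¬ (q : ℤ) ∣ h.coeff 0 := fun hd => h0 (hcoeff0 ▸ dvd_mul_of_dvd_right hd _)
  have hwg0 : newtonWeight q n (-k) g 0 = 0 := by
    simp [newtonWeight, padicValInt.eq_zero_of_not_dvd hg0]
  have hwh0 : newtonWeight q n (-k) h 0 = 0 := by
    simp [newtonWeight, padicValInt.eq_zero_of_not_dvd hh0]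
  have hL : ∀ c ∈ (g * h).support, 0 ≤ newtonWeight q n (-k) (g * h) c := by
    rw [← hfgh]
    intro c hc
    have hcn : (c : ℤ) ≤ n := by exact_mod_cast le_natDegree_of_mem_supp c hc
    rcases c.eq_zero_or_pos with rfl | hc0
    · simp only [newtonWeight, CharP.cast_eq_zero, mul_zero, add_zero]
      positivity
    · have hk : (k : ℤ) ≤ padicValInt q (f.coeff c) := by
        have := (padicValInt_dvd_iff k _).1 (hmid c hc0)
        exact_mod_cast this.resolve_left (mem_support_iff.1 hc)
      unfold newtonWeight
      nlinarith
  have hgr : 0 ≤ newtonWeight q n (-k) g g.natDegree := by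
    simpa [hwh0] using le_newtonWeight_add hn hL (natDegree_mem_support_of_nonzero hg)
      (mem_support_iff.2 (fun h0' => hh0 (h0' ▸ dvd_zero _)))
  have hhs : 0 ≤ newtonWeight q n (-k) h h.natDegree := by
    simpa [hwg0] using le_newtonWeight_add hn hL
      (mem_support_iff.2 (fun h0' => hg0 (h0' ▸ dvd_zero _)))
      (natDegree_mem_support_of_nonzero hh)
  have hsum :
      newtonWeight q n (-k) g g.natDegree + newtonWeight q n (-k) h h.natDegree ≤ 0 := by
    have hdeg : g.natDegree + h.natDegree = n := by rw [← natDegree_mul hg hh, ← hfgh]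
    have hv : (padicValInt q g.leadingCoeff : ℤ) + padicValInt q h.leadingCoeff ≤ k := by
      have := hlead
      rw [padicValInt_dvd_iff, not_or, not_le, hfgh, leadingCoeff_mul,
        padicValInt.mul (leadingCoeff_ne_zero.2 hg) (leadingCoeff_ne_zero.2 hh)] at this
      omega
    simp only [newtonWeight, coeff_natDegree]
    have hdeg' : (g.natDegree : ℤ) + h.natDegree = n := by exact_mod_cast hdeg
    nlinarith
  have htop : (n : ℤ) * padicValInt q g.leadingCoeff = k * g.natDegree := by
    have := le_antisymm (by linarith) hgr
    simp only [newtonWeight, coeff_natDegree] at this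
    linarith
  exact ⟨padicValInt q g.leadingCoeff, by exact_mod_cast htop.symm⟩

end Polynomial

theorem corollary_1_14_general (n : ℕ) (a : ℕ → ℤ)
    (p q : ℕ) (hp : p.Prime) (hq : q.Prime)
    (k : ℕ)
    (j : ℕ) (hj : j < n / Nat.gcd k n)
    (hp1 : ∀ i ≤ j, ¬ (p : ℤ) ∣ a i)
    (hp2 : ∀ i, j < i → i ≤ n → (p : ℤ) ∣ a i)
    (hp3 : ¬ (p : ℤ)^2 ∣ a n)
    (hq1 : ¬ (q : ℤ) ∣ a 0)
    (hq2 : ∀ i, 0 < i → i ≤ n → (q : ℤ)^k ∣ a i)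
    (hq3 : ¬ (q : ℤ)^(k+1) ∣ a n) :
    Irreducible ((∑ i ∈ range (n+1), C (a i) * X ^ i).map (Int.castRingHom ℚ)) := by
  have := Fact.mk hp
  have := Fact.mk hq
  set f := ∑ i ∈ range (n+1), C (a i) * X ^ i
  have hcoeff : ∀ i, f.coeff i = if i ≤ n then a i else 0 := coeff_sum_range_C_mul_X_pow n a
  have hn : 0 < n := Nat.pos_of_ne_zero (by rintro rfl; simp at hj)
  have hdeg : f.natDegree = n := natDegree_eq_of_le_of_coeff_ne_zero
    (natDegree_le_iff_coeff_eq_zero.2 fun i hi => by simp [hcoeff, not_le.2 hi])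
    (by rw [hcoeff, if_pos le_rfl]; rintro h0; exact hp3 (h0 ▸ dvd_zero _))
  have hlead : f.leadingCoeff = a n := by rw [leadingCoeff, hdeg, hcoeff, if_pos le_rfl]
  have hdeg_gt : ∀ g h, f = g * h → 0 < g.natDegree → j < g.natDegree := fun g h hfgh hg =>
    have hdvd := natDegree_dvd_mul_natDegree_of_eq_mul hfgh (hdeg ▸ hn)
      (by simpa [hcoeff] using hq1)
      (fun i hi => by rw [hcoeff]; split_ifs with hin; exacts [hq2 i hi hin, dvd_zero _])
      (hlead ▸ hq3)
    hj.trans_le (Nat.le_of_dvd hg (Nat.div_gcd_dvd_of_dvd_mul hn (hdeg ▸ hdvd)))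
  have hdeg_le : ∀ g h, f = g * h → ¬ (p : ℤ) ∣ h.leadingCoeff → h.natDegree ≤ j :=
    fun g h hfgh => natDegree_le_of_not_dvd_leadingCoeff hfgh
      (by simpa [hcoeff] using hp1 0 (Nat.zero_le j))
      (fun i hi => by rw [hcoeff]; split_ifs with hin; exacts [hp2 i hi hin, dvd_zero _])
  refine irreducible_map_cast_of_forall_eq_mul (hdeg ▸ hn) fun g h hfgh => ?_
  by_contra! hpos
  have hgh : f = h * g := by rw [hfgh, mul_comm]
  have hsq : ¬ (p : ℤ) ^ 2 ∣ g.leadingCoeff * h.leadingCoeff := by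
    rwa [← leadingCoeff_mul, ← hfgh, hlead]
  rcases not_and_or.1 fun hpgh : _ ∧ _ => hsq (sq (p : ℤ) ▸ mul_dvd_mul hpgh.1 hpgh.2)
    with hg | hh
  · exact (hdeg_gt g h hfgh (Nat.pos_of_ne_zero hpos.1)).not_ge (hdeg_le h g hgh hg)
  · exact (hdeg_gt h g hgh (Nat.pos_of_ne_zero hpos.2)).not_ge (hdeg_le g h hfgh hh)

theorem corollary_1_14 (n : ℕ) (hn : 1 ≤ n) (a : ℕ → ℤ)
    (ha0 : a 0 ≠ 0) (han : a n ≠ 0)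
    (p q : ℕ) (hp : p.Prime) (hq : q.Prime) (hpq : p ≠ q)
    (k : ℕ) (hk : 0 < k)
    (j : ℕ) (hj : j < n / Nat.gcd k n)
    (hp1 : ∀ i ≤ j, ¬ (p : ℤ) ∣ a i)
    (hp2 : ∀ i, j < i → i ≤ n → (p : ℤ) ∣ a i)
    (hp3 : ¬ (p : ℤ)^2 ∣ a n)
    (hq1 : ¬ (q : ℤ) ∣ a 0)
    (hq2 : ∀ i, 0 < i → i ≤ n → (q : ℤ)^k ∣ a i)
    (hq3 : ¬ (q : ℤ)^(k+1) ∣ a n) :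
    Irreducible ((∑ i ∈ range (n+1), C (a i) * X ^ i).map (Int.castRingHom ℚ)) :=
  corollary_1_14_general n a p q hp hq k j hj hp1 hp2 hp3 hq1 hq2 hq3
end
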